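/- Let T(b) = k₀·b + t₀ for b < b*, and T(b) = k₁·b + t₁ for b ≥ b*, with 0 < k₀ < k₁, t₀, t₁ > 0, and continuity k₀·b* + t₀ = k₁·b* + t₁. Then T is strictly subadditive on positive reals: for all x, y > 0, T(x+y) < T(x) + T(y). -/

import Mathlib

/-!
Under continuity at `bstar` and `k0 ≤ k1`, `T` is the maximum of the two affine lines
`b ↦ k0 * b + t0` and `b ↦ k1 * b + t1`. An affine function with positive intercept is strictly
subadditive, since `f (x + y) = f x + f y - t`, and a pointwise maximum of strictly subadditive
functions is again strictly subadditive.
-/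

/-- Piecewise-linear batch iteration-time model. -/
noncomputable def T (k0 t0 k1 t1 bstar : ℝ) (b : ℝ) : ℝ :=
  if b < bstar then k0 * b + t0 else k1 * b + t1

theorem max_lt_max_add_max_of_lt_add {M β : Type*} [Add M] [AddCommMonoid β] [LinearOrder β]
    [IsOrderedAddMonoid β] {f g : M → β} (hf : ∀ x y, f (x + y) < f x + f y)
    (hg : ∀ x y, g (x + y) < g x + g y) (x y : M) :
    max (f (x + y)) (g (x + y)) < max (f x) (g x) + max (f y) (g y) :=
  max_lt
    ((hf x y).trans_le (add_le_add (le_max_left _ _) (le_max_left _ _)))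
    ((hg x y).trans_le (add_le_add (le_max_right _ _) (le_max_right _ _)))

theorem affine_add_lt_of_pos {k t : ℝ} (ht : 0 < t) (x y : ℝ) :
    k * (x + y) + t < (k * x + t) + (k * y + t) := by
  rw [mul_add]
  linarith

theorem T_eq_max {k0 t0 k1 t1 bstar : ℝ} (hk01 : k0 ≤ k1)
    (hcont : k0 * bstar + t0 = k1 * bstar + t1) (b : ℝ) :
    T k0 t0 k1 t1 bstar b = max (k0 * b + t0) (k1 * b + t1) := by
  have hdiff : (k1 * b + t1) - (k0 * b + t0) = (k1 - k0) * (b - bstar) := by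
    linear_combination -hcont
  unfold T
  split_ifs with hb
  · refine (max_eq_left ?_).symm
    linarith [mul_nonpos_of_nonneg_of_nonpos (sub_nonneg.2 hk01) (sub_nonpos.2 hb.le)]
  · refine (max_eq_right ?_).symm
    linarith [mul_nonneg (sub_nonneg.2 hk01) (sub_nonneg.2 (not_lt.1 hb))]

theorem strictly_subadditive_general (k0 t0 k1 t1 bstar : ℝ)
    (hk01 : k0 < k1) (ht0 : 0 < t0) (ht1 : 0 < t1)
    (hcont : k0 * bstar + t0 = k1 * bstar + t1) :
    ∀ x y : ℝ, 0 < x → 0 < y →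
      T k0 t0 k1 t1 bstar (x + y) < T k0 t0 k1 t1 bstar x + T k0 t0 k1 t1 bstar y := by
  intro x y _ _
  simp only [T_eq_max hk01.le hcont]
  exact max_lt_max_add_max_of_lt_add (f := fun b ↦ k0 * b + t0) (g := fun b ↦ k1 * b + t1)
    (affine_add_lt_of_pos ht0) (affine_add_lt_of_pos ht1) x y

theorem strictly_subadditive (k0 t0 k1 t1 bstar : ℝ)
    (hk0 : 0 < k0) (hk01 : k0 < k1) (ht0 : 0 < t0) (ht1 : 0 < t1)
    (hcont : k0 * bstar + t0 = k1 * bstar + t1) :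
    ∀ x y : ℝ, 0 < x → 0 < y →
      T k0 t0 k1 t1 bstar (x + y) < T k0 t0 k1 t1 bstar x + T k0 t0 k1 t1 bstar y :=
  strictly_subadditive_general k0 t0 k1 t1 bstar hk01 ht0 ht1 hcont
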